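/- arXiv:1911.03837 — 4 statements merged into one kernel-verified Lean document; each statement's English description precedes it below -/
import Mathlib

section
/- Let n ≥ 2 and fix a natural number k₀. Every divergent smooth path γ : [0,∞) → 𝔹ⁿ whose image is disjoint from ⋃_{k ≥ k₀} Γ_k has infinite length, i.e. its total variation equals ∞. -/
open Set Metric Filter

/-- The "labyrinth" barrier `Γ_k`: the sphere of radius `s k` centered at the origin,
minus the open `ε`-ball around the point `p_k = (0,…,0,(−1)^k s_k)`. -/
noncomputable def Gamma (n : ℕ) (hn : 2 ≤ n) (s : ℕ → ℝ) (ε : ℝ) (k : ℕ) :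
    Set (EuclideanSpace ℝ (Fin n)) :=
  Metric.sphere (0 : EuclideanSpace ℝ (Fin n)) (s k) \
    Metric.ball (EuclideanSpace.single (⟨n - 1, by omega⟩ : Fin n) ((-1 : ℝ) ^ k * s k)) ε

/-- A path `γ` (with time domain `[0,∞)`) is divergent in `M` if it eventually leaves
every compact subset of `M`. -/
def DivergentIn {E : Type*} [TopologicalSpace E] (γ : ℝ → E) (M : Set E) : Prop :=
  ∀ K : Set E, IsCompact K → K ⊆ M → ∀ᶠ t in atTop, γ t ∉ K

/-- every divergent smooth path in the open unit ball `𝔹ⁿ` avoiding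
`⋃_{k ≥ k₀} Γ_k` has infinite length. -/
theorem divergent_path_avoiding_labyrinth_has_infinite_length
    (n : ℕ) (hn : 2 ≤ n) (r s : ℕ → ℝ) (ε : ℝ)
    (hs0 : 0 < s 0) (hsr : ∀ k, s k < r k) (hrs : ∀ k, r k < s (k + 1))
    (hr1 : Tendsto r atTop (nhds 1)) (hs1 : Tendsto s atTop (nhds 1))
    (hε0 : 0 < ε) (hεs : ε < s 0)
    (k₀ : ℕ)
    (γ : ℝ → EuclideanSpace ℝ (Fin n))
    (hγball : ∀ t ∈ Ici (0 : ℝ), γ t ∈ ball (0 : EuclideanSpace ℝ (Fin n)) 1)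
    (hγsmooth : ContDiffOn ℝ (⊤ : ℕ∞) γ (Ici (0 : ℝ)))
    (hγdiv : DivergentIn γ (ball (0 : EuclideanSpace ℝ (Fin n)) 1))
    (hγavoid : ∀ t ∈ Ici (0 : ℝ), γ t ∉ ⋃ k ∈ {k : ℕ | k₀ ≤ k}, Gamma n hn s ε k) :
    eVariationOn γ (Ici 0) = ⊤ := by
  classical
  have hcont : ContinuousOn γ (Ici 0) := hγsmooth.continuousOn
  have hmono : StrictMono s := strictMono_nat_of_lt_succ fun k => (hsr k).trans (hrs k)
  have hsle1 : ∀ k, s k ≤ 1 := hmono.monotone.ge_of_tendsto hs1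
  have hslt1 : ∀ k, s k < 1 := fun k => lt_of_lt_of_le (hmono (Nat.lt_succ_self k)) (hsle1 _)
  have hspos : ∀ k, 0 < s k := fun k => hs0.trans_le (hmono.monotone (Nat.zero_le k))
  set p : ℕ → EuclideanSpace ℝ (Fin n) :=
    fun k => EuclideanSpace.single (⟨n - 1, by omega⟩ : Fin n) ((-1 : ℝ) ^ k * s k) with hp
  have hdistp : ∀ k, dist (p k) (p (k + 1)) = s k + s (k + 1) := by
    intro k
    rw [hp]
    rw [EuclideanSpace.dist_single_same, Real.dist_eq]
    have h1 : (-1 : ℝ) ^ (k + 1) = -((-1 : ℝ) ^ k) := by ring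
    rw [h1]
    have hk1 := hspos k
    have hk2 := hspos (k + 1)
    rcases Nat.even_or_odd k with h | h
    · rw [h.neg_one_pow, abs_of_nonneg (by linarith)]
      ring
    · rw [h.neg_one_pow, abs_of_nonpos (by linarith)]
      ring
  have key : ∀ k, k₀ ≤ k → ∀ a, 0 ≤ a → ‖γ a‖ < s k →
      ∃ t, a ≤ t ∧ ‖γ t‖ = s k ∧ dist (γ t) (p k) < ε := by
    intro k hk a ha hlt
    have hcpt : IsCompact (closedBall (0 : EuclideanSpace ℝ (Fin n)) (s k)) :=
      isCompact_closedBall _ _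
    have hsub : closedBall (0 : EuclideanSpace ℝ (Fin n)) (s k) ⊆ ball 0 1 :=
      closedBall_subset_ball (hslt1 k)
    obtain ⟨T, hT⟩ := (hγdiv _ hcpt hsub).exists_forall_of_atTop
    set b := max a T with hb
    have hbnorm : s k < ‖γ b‖ := by
      have := hT b (le_max_right _ _)
      simpa [mem_closedBall, dist_zero_right, not_le] using this
    have hab : a ≤ b := le_max_left _ _
    have hIcc : Icc a b ⊆ Ici (0 : ℝ) := fun x hx => ha.trans hx.1
    have hcont' : ContinuousOn (fun t => ‖γ t‖) (Icc a b) := (hcont.mono hIcc).norm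
    obtain ⟨t, htmem, ht⟩ :=
      intermediate_value_Icc hab hcont' (⟨hlt.le, hbnorm.le⟩ : s k ∈ Icc (‖γ a‖) (‖γ b‖))
    refine ⟨t, htmem.1, ht, ?_⟩
    have ht0 : (0 : ℝ) ≤ t := ha.trans htmem.1
    have hsph : γ t ∈ sphere (0 : EuclideanSpace ℝ (Fin n)) (s k) := by
      simpa [mem_sphere_zero_iff_norm] using ht
    have havoid := hγavoid t (mem_Ici.mpr ht0)
    simp only [mem_iUnion, mem_setOf_eq, not_exists] at havoid
    by_contra h
    exact havoid k hk ⟨hsph, by simpa [Gamma, mem_ball, hp] using h⟩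
  have hγ0 : ‖γ 0‖ < 1 := by simpa [mem_ball, dist_zero_right] using hγball 0 Set.self_mem_Ici
  obtain ⟨K, hKγ, hK₀⟩ :=
    ((hs1.eventually (eventually_gt_nhds hγ0)).and (eventually_ge_atTop k₀)).exists
  choose! f hf1 hf2 hf3 using key
  let u : ℕ → ℝ := fun j => Nat.rec (f K 0) (fun j tj => f (K + (j + 1)) tj) j
  have huS : ∀ j, u (j + 1) = f (K + (j + 1)) (u j) := fun j => rfl
  have main : ∀ j, 0 ≤ u j ∧ ‖γ (u j)‖ = s (K + j) ∧ dist (γ (u j)) (p (K + j)) < ε := by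
    intro j
    induction j with
    | zero =>
        have h1 := hf1 K hK₀ 0 le_rfl hKγ
        exact ⟨h1, hf2 K hK₀ 0 le_rfl hKγ, hf3 K hK₀ 0 le_rfl hKγ⟩
    | succ j ih =>
        have hk' : k₀ ≤ K + (j + 1) := le_trans hK₀ (Nat.le_add_right _ _)
        have hlt : ‖γ (u j)‖ < s (K + (j + 1)) := by
          rw [ih.2.1]; exact hmono (by omega)
        exact ⟨ih.1.trans (hf1 _ hk' _ ih.1 hlt), hf2 _ hk' _ ih.1 hlt, hf3 _ hk' _ ih.1 hlt⟩
  have humono : Monotone u := by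
    apply monotone_nat_of_le_succ
    intro j
    have hk' : k₀ ≤ K + (j + 1) := le_trans hK₀ (Nat.le_add_right _ _)
    have hlt : ‖γ (u j)‖ < s (K + (j + 1)) := by
      rw [(main j).2.1]; exact hmono (by omega)
    exact hf1 _ hk' _ (main j).1 hlt
  have huIci : ∀ j, u j ∈ Ici (0 : ℝ) := fun j => (main j).1
  set c := ENNReal.ofReal (2 * (s 0 - ε)) with hc
  have hcle : ∀ j, c ≤ edist (γ (u (j + 1))) (γ (u j)) := by
    intro j
    rw [edist_dist]
    apply ENNReal.ofReal_le_ofReal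
    have h1 := (main j).2.2
    have h2 := (main (j + 1)).2.2
    have hpp := hdistp (K + j)
    have htri := dist_triangle4 (p (K + j)) (γ (u j)) (γ (u (j + 1))) (p (K + j + 1))
    have hm1 : s 0 ≤ s (K + j) := hmono.monotone (Nat.zero_le _)
    have hm2 : s 0 ≤ s (K + j + 1) := hmono.monotone (Nat.zero_le _)
    have e1 : dist (p (K + j)) (γ (u j)) < ε := by rw [dist_comm]; exact h1
    have e2 : dist (γ (u (j + 1))) (p (K + j + 1)) < ε := by
      simpa [Nat.add_assoc] using h2
    have hd : dist (γ (u (j + 1))) (γ (u j)) = dist (γ (u j)) (γ (u (j + 1))) := dist_comm _ _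
    linarith
  have hsum : ∀ N : ℕ, (N : ENNReal) * c ≤ eVariationOn γ (Ici 0) := by
    intro N
    calc (N : ENNReal) * c = ∑ _i ∈ Finset.range N, c := by
          simp [Finset.sum_const, mul_comm]
      _ ≤ ∑ i ∈ Finset.range N, edist (γ (u (i + 1))) (γ (u i)) :=
          Finset.sum_le_sum fun i _ => hcle i
      _ ≤ eVariationOn γ (Ici 0) := eVariationOn.sum_le (f := γ) (n := N) humono huIci
  have hc0 : c ≠ 0 := by
    rw [hc]
    simp only [ne_eq, ENNReal.ofReal_eq_zero, not_le]
    linarith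
  have : (⊤ : ENNReal) ≤ eVariationOn γ (Ici 0) := by
    calc (⊤ : ENNReal) = (⨆ N : ℕ, (N : ENNReal)) * c := by
          rw [ENNReal.iSup_natCast, ENNReal.top_mul hc0]
      _ = ⨆ N : ℕ, (N : ENNReal) * c := by rw [ENNReal.iSup_mul]
      _ ≤ eVariationOn γ (Ici 0) := iSup_le hsum
  exact top_le_iff.mp this
end

section
/- Let S = ℝ² ∪ {∞} be the one-point compactification of the plane. Let E ⊆ S be a closed (hence compact) subset with ∞ ∈ E, and let E* ⊆ E and Z ⊆ E satisfy: Z is countably infinite; ∞ ∉ Z and Z ∩ E* = ∅; every point of Z is an isolated point of E; and the set of accumulation points of Z in E equals E*. Let F be a finite subset of ℝ² with F ∩ E = ∅. Then there exists a homeomorphism h : E ∪ F → E (both with the subspace topology from S) such that h restricted to E* is the identity and h(Z ∪ F) = Z. -/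
/-!
Since `Z` is infinite and `E` is compact and first countable, `Z` contains an injective sequence
`z₀, z₁, …` converging to some `p`, and `p ∉ Z` because the points of `Z` are isolated in `E`.
Enumerate `F = {f₀, …, fₙ₋₁}`. The Hilbert-hotel map `fᵢ ↦ zᵢ`, `zₖ ↦ zₖ₊ₙ`, fixing every other
point, is a bijection `E ∪ F → E`. It is continuous at the isolated points `fᵢ` and `zₖ`, at `p`
because the shifted sequence still converges to `p`, and elsewhere it is locally the identity,
since `{p, z₀, z₁, …} ∪ F` is closed. A continuous bijection from a compact space onto a Hausdorff
space is a homeomorphism.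
-/

open Set Filter Topology Function

instance OnePoint.firstCountableTopology {X : Type*} [PseudoMetricSpace X] [ProperSpace X] :
    FirstCountableTopology (OnePoint X) := by
  refine ⟨fun x => ?_⟩
  cases x with
  | infty =>
    rw [OnePoint.nhds_infty_eq, coclosedCompact_eq_cocompact, ← Metric.cobounded_eq_cocompact]
    cases isEmpty_or_nonempty X with
    | inl _ => rw [filter_eq_bot_of_isEmpty (Bornology.cobounded X)]; infer_instance
    | inr h =>
      rw [← Metric.comap_dist_right_atTop h.some]
      infer_instance
  | coe a =>
    rw [OnePoint.nhds_coe_eq]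
    infer_instance

theorem tendsto_sumElim_cofinite {X α β : Type*} [Finite α] {l : Filter X} (f : α → X) {z : β → X}
    (hz : Tendsto z cofinite l) : Tendsto (Sum.elim f z) cofinite l := by
  rw [Tendsto, map_sumElim_eq, sup_le_iff]
  exact ⟨tendsto_bot.mono_left ((comap_cofinite_le _).trans cofinite_eq_bot.le),
    hz.mono_left (comap_cofinite_le _)⟩

section AccPt

variable {X : Type*} [TopologicalSpace X] {s : Set X} {x p : X}

theorem not_accPt_of_isOpen_inter_eq_singleton {U : Set X} (hU : IsOpen U) (h : U ∩ s = {x}) :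
    ¬AccPt x (𝓟 s) := by
  rw [accPt_iff_nhds]
  intro hacc
  obtain ⟨y, hy, hyx⟩ := hacc U (hU.mem_nhds (h.ge rfl).1)
  exact hyx (h.le hy)

theorem not_accPt_union_of_finite [T1Space X] {t : Set X} (hs : ¬AccPt x (𝓟 s)) (ht : t.Finite) :
    ¬AccPt x (𝓟 (s ∪ t)) := by
  rw [← sup_principal, accPt_sup]
  exact not_or.2 ⟨hs, fun h => Set.Infinite.of_accPt h ht⟩

theorem accPt_of_injective_of_tendsto {ι : Type*} [Infinite ι] {u : ι → X} (hu : Injective u)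
    (hlim : Tendsto u cofinite (𝓝 p)) (hs : ∀ i, u i ∈ s) : AccPt p (𝓟 s) := by
  rw [accPt_principal_iff_nhdsWithin]
  refine (tendsto_nhdsWithin_iff.2 ⟨hlim, ?_⟩).neBot (f := u)
  exact (hu.tendsto_cofinite.eventually (eventually_cofinite_ne p)).mono fun i hi => ⟨hs i, hi⟩

theorem Set.Infinite.exists_injective_tendsto [FirstCountableTopology X] {K : Set X}
    (hs : s.Infinite) (hK : IsCompact K) (hsK : s ⊆ K) :
    ∃ p ∈ K, ∃ z : ℕ → X, Injective z ∧ (∀ n, z n ∈ s) ∧ Tendsto z cofinite (𝓝 p) := by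
  let e := hs.natEmbedding
  obtain ⟨p, hpK, φ, hφ, hlim⟩ := hK.tendsto_subseq fun n => hsK (e n).2
  refine ⟨p, hpK, _, Subtype.val_injective.comp (e.injective.comp hφ.injective),
    fun n => (e (φ n)).2, ?_⟩
  rwa [Nat.cofinite_eq_atTop]

end AccPt

noncomputable def shiftAlong {X α : Type*} (w : α → X) (τ : α → α) : X → X :=
  extend w (w ∘ τ) id

section ShiftAlong

variable {X α : Type*} {w : α → X} {τ : α → α}

theorem shiftAlong_apply (hw : Injective w) (a : α) : shiftAlong w τ (w a) = w (τ a) :=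
  hw.extend_apply _ _ a

theorem shiftAlong_apply_of_notMem_range {x : X} (hx : x ∉ range w) : shiftAlong w τ x = x :=
  extend_apply' _ _ _ hx

theorem shiftAlong_injective (hw : Injective w) (hτ : Injective τ) :
    Injective (shiftAlong w τ) := by
  have key : ∀ a y, y ∉ range w → shiftAlong w τ (w a) ≠ shiftAlong w τ y := by
    intro a y hy h
    rw [shiftAlong_apply hw, shiftAlong_apply_of_notMem_range hy] at h
    exact hy ⟨τ a, h⟩
  intro x y hxy
  by_cases hx : x ∈ range w <;> by_cases hy : y ∈ range w
  · obtain ⟨a, rfl⟩ := hx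
    obtain ⟨b, rfl⟩ := hy
    rw [shiftAlong_apply hw, shiftAlong_apply hw] at hxy
    rw [hτ (hw hxy)]
  · obtain ⟨a, rfl⟩ := hx
    exact absurd hxy (key a y hy)
  · obtain ⟨b, rfl⟩ := hy
    exact absurd hxy.symm (key b x hx)
  · rwa [shiftAlong_apply_of_notMem_range hx, shiftAlong_apply_of_notMem_range hy] at hxy

theorem preimage_shiftAlong (hw : Injective w) {T : Set X} (hT : w '' range τ ⊆ T) :
    shiftAlong w τ ⁻¹' T = T ∪ w '' (range τ)ᶜ := by
  ext x
  rw [mem_preimage]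
  by_cases hx : x ∈ range w
  · obtain ⟨a, rfl⟩ := hx
    rw [shiftAlong_apply hw]
    refine iff_of_true (hT ⟨τ a, mem_range_self a, rfl⟩) ?_
    by_cases ha : a ∈ range τ
    · exact Or.inl (hT (mem_image_of_mem w ha))
    · exact Or.inr (mem_image_of_mem w ha)
  · rw [shiftAlong_apply_of_notMem_range hx, mem_union,
      or_iff_left fun h => hx (image_subset_range _ _ h)]

theorem range_shiftAlong (hw : Injective w) : range (shiftAlong w τ) = (w '' (range τ)ᶜ)ᶜ := by
  ext y
  by_cases hy : y ∈ range w
  · obtain ⟨b, rfl⟩ := hy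
    rw [mem_compl_iff, hw.mem_set_image, notMem_compl_iff]
    constructor
    · rintro ⟨x, hx⟩
      by_cases hxw : x ∈ range w
      · obtain ⟨a, rfl⟩ := hxw
        rw [shiftAlong_apply hw] at hx
        exact ⟨a, hw hx⟩
      · rw [shiftAlong_apply_of_notMem_range hxw] at hx
        exact absurd ⟨b, hx.symm⟩ hxw
    · rintro ⟨a, rfl⟩
      exact ⟨w a, shiftAlong_apply hw a⟩
  · exact iff_of_true ⟨y, shiftAlong_apply_of_notMem_range hy⟩
      fun h => hy (image_subset_range _ _ h)

variable [TopologicalSpace X] {p : X}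

theorem continuousAt_shiftAlong [T1Space X] (hw : Injective w)
    (hlim : Tendsto (w ∘ τ) cofinite (𝓝 p)) (hp : p ∉ range w) :
    ContinuousAt (shiftAlong w τ) p := by
  rw [ContinuousAt, shiftAlong_apply_of_notMem_range hp]
  intro V hV
  have hA : {a | w (τ a) ∉ V}.Finite := eventually_cofinite.1 (hlim hV)
  have hpA : p ∉ w '' {a | w (τ a) ∉ V} := fun h => hp (image_subset_range _ _ h)
  refine mem_map.2 <| mem_of_superset (inter_mem hV ((hA.image w).isClosed.compl_mem_nhds hpA)) ?_
  rintro y ⟨hyV, hyA⟩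
  by_cases hyw : y ∈ range w
  · obtain ⟨a, rfl⟩ := hyw
    rw [mem_preimage, shiftAlong_apply hw]
    by_contra ha
    exact hyA (mem_image_of_mem w ha)
  · rwa [mem_preimage, shiftAlong_apply_of_notMem_range hyw]

theorem continuousOn_shiftAlong [T2Space X] {s : Set X} (hw : Injective w) (hτ : Injective τ)
    (hlim : Tendsto w cofinite (𝓝 p)) (hp : p ∉ range w)
    (hs : ∀ a, w a ∈ s → ¬AccPt (w a) (𝓟 s)) : ContinuousOn (shiftAlong w τ) s := by
  intro x hx
  by_cases hxw : x ∈ range w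
  · obtain ⟨a, rfl⟩ := hxw
    exact continuousWithinAt_of_not_accPt (hs a hx)
  by_cases hxp : x = p
  · subst hxp
    exact (continuousAt_shiftAlong hw (hlim.comp hτ.tendsto_cofinite) hp).continuousWithinAt
  have hclosed : IsClosed (insert p (range w)) := hlim.isCompact_insert_range_of_cofinite.isClosed
  have hid : shiftAlong w τ =ᶠ[𝓝 x] id := by
    filter_upwards [hclosed.compl_mem_nhds (by simp [hxp, hxw])] with y hy
    exact shiftAlong_apply_of_notMem_range fun h => hy (mem_insert_of_mem p h)
  exact (continuousAt_id.congr hid.symm).continuousWithinAt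

end ShiftAlong

theorem exists_bijOn_union_range_of_tendsto {X : Type*} [TopologicalSpace X] [T2Space X] {p : X}
    {E : Set X} {n : ℕ} {f : Fin n → X} {z : ℕ → X}
    (hE : IsClosed E) (hf : Injective f) (hfE : ∀ i, f i ∉ E) (hz : Injective z)
    (hzE : ∀ k, z k ∈ E) (hz_iso : ∀ k, ¬AccPt (z k) (𝓟 E)) (hlim : Tendsto z cofinite (𝓝 p)) :
    ∃ g : X → X, BijOn g (E ∪ range f) E ∧ ContinuousOn g (E ∪ range f) ∧
      (∀ x ∉ range f ∪ range z, g x = x) ∧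
      ∀ T, range z ⊆ T → g ⁻¹' T = T ∪ range f := by
  set w := Sum.elim f z
  set τ : Fin n ⊕ ℕ → Fin n ⊕ ℕ := Sum.inr ∘ finSumNatEquiv n
  have hw : Injective w := hf.sumElim hz fun i k h => hfE i (h ▸ hzE k)
  have hτ : Injective τ := Sum.inr_injective.comp (finSumNatEquiv n).injective
  have hw_moved : w '' range τ = range z := by
    rw [range_comp, (finSumNatEquiv n).range_eq_univ, image_univ, ← range_comp, Sum.elim_comp_inr]
  have hw_fresh : w '' (range τ)ᶜ = range f := by
    rw [range_comp, (finSumNatEquiv n).range_eq_univ, image_univ, compl_range_inr, ← range_comp,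
      Sum.elim_comp_inl]
  have hpre : ∀ T, range z ⊆ T → shiftAlong w τ ⁻¹' T = T ∪ range f := fun T hT => by
    rw [preimage_shiftAlong hw (hw_moved ▸ hT), hw_fresh]
  have hpz : p ∉ range z := by
    rintro ⟨k, rfl⟩
    exact hz_iso k (accPt_of_injective_of_tendsto hz hlim hzE)
  have hpf : p ∉ range f := by
    rintro ⟨i, hi⟩
    exact hfE i (hi ▸ hE.mem_of_tendsto hlim (Eventually.of_forall hzE))
  have hiso : ∀ a, w a ∈ E ∪ range f → ¬AccPt (w a) (𝓟 (E ∪ range f)) := by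
    rintro (i | k) -
    · exact not_accPt_union_of_finite (fun h => hfE i (isClosed_iff_accPt.1 hE _ h)) (finite_range f)
    · exact not_accPt_union_of_finite (hz_iso k) (finite_range f)
  have hE_range : E ⊆ range (shiftAlong w τ) := by
    rw [range_shiftAlong hw, hw_fresh]
    rintro x hx ⟨i, rfl⟩
    exact hfE i hx
  refine ⟨shiftAlong w τ, ?_, continuousOn_shiftAlong hw hτ (tendsto_sumElim_cofinite f hlim) (by simp [w, hpz, hpf]) hiso,
    fun x hx => shiftAlong_apply_of_notMem_range (by rwa [Sum.elim_range]), hpre⟩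
  rw [← hpre E (range_subset_iff.2 hzE)]
  exact ⟨mapsTo_preimage _ _, (shiftAlong_injective hw hτ).injOn,
    (image_preimage_eq_of_subset hE_range).superset⟩

theorem absorb_finite_set_into_endset_general
    (E Estar Z : Set (OnePoint (ℝ × ℝ)))
    (hEclosed : IsClosed E)
    (hEstarE : Estar ⊆ E) (hZE : Z ⊆ E)
    (hZinf : Z.Infinite)
    (hZEstar : Z ∩ Estar = ∅)
    -- every point of `Z` is an isolated point of `E`
    (hiso : ∀ z ∈ Z, ∃ U : Set (OnePoint (ℝ × ℝ)), IsOpen U ∧ U ∩ E = {z})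
    (F : Set (OnePoint (ℝ × ℝ))) (hFfin : F.Finite)
    (hFE : F ∩ E = ∅) :
    ∃ h : ↥(E ∪ F) ≃ₜ ↥E,
      (∀ x : ↥(E ∪ F), (x : OnePoint (ℝ × ℝ)) ∈ Estar →
        ((h x : OnePoint (ℝ × ℝ)) = (x : OnePoint (ℝ × ℝ)))) ∧
      (∀ x : ↥(E ∪ F), ((x : OnePoint (ℝ × ℝ)) ∈ Z ∪ F ↔
        (h x : OnePoint (ℝ × ℝ)) ∈ Z)) := by
  have hZ_iso : ∀ x ∈ Z, ¬AccPt x (𝓟 E) := fun x hx =>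
    let ⟨_, hU, hUE⟩ := hiso x hx
    not_accPt_of_isOpen_inter_eq_singleton hU hUE
  obtain ⟨p, -, z, hz, hzZ, hlim⟩ := hZinf.exists_injective_tendsto hEclosed.isCompact hZE
  obtain ⟨n, f, rfl⟩ := hFfin.fin_embedding
  obtain ⟨g, hbij, hcont, hfix, hpre⟩ := exists_bijOn_union_range_of_tendsto hEclosed f.injective
    (fun i hi => hFE.subset ⟨mem_range_self i, hi⟩) hz (fun k => hZE (hzZ k))
    (fun k => hZ_iso _ (hzZ k)) hlim
  have : CompactSpace ↥(E ∪ range f) :=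
    isCompact_iff_compactSpace.1 (hEclosed.union (finite_range f).isClosed).isCompact
  refine ⟨(hcont.mapsToRestrict hbij.mapsTo).homeoOfEquivCompactToT2 (f := hbij.equiv g),
    fun x hx => hfix x ?_, fun x => by rw [← hpre Z (range_subset_iff.2 hzZ)]; rfl⟩
  rintro (hxf | ⟨k, hk⟩)
  · exact hFE.subset ⟨hxf, hEstarE hx⟩
  · exact hZEstar.subset ⟨hk ▸ hzZ k, hx⟩

/-- Lemma 4.1: absorbing a finite set `F` into the endset: there is a
homeomorphism `h : E ∪ F → E` which is the identity on `E*` and carries `Z ∪ F` onto `Z`. -/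
theorem absorb_finite_set_into_endset
    (E Estar Z : Set (OnePoint (ℝ × ℝ)))
    (hEclosed : IsClosed E) (hinfE : OnePoint.infty ∈ E)
    (hEstarE : Estar ⊆ E) (hZE : Z ⊆ E)
    (hZcount : Z.Countable) (hZinf : Z.Infinite)
    (hinfZ : OnePoint.infty ∉ Z) (hZEstar : Z ∩ Estar = ∅)
    -- every point of `Z` is an isolated point of `E`
    (hiso : ∀ z ∈ Z, ∃ U : Set (OnePoint (ℝ × ℝ)), IsOpen U ∧ U ∩ E = {z})
    -- the set of accumulation points of `Z` in `E` equals `E*`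
    (hacc : {x | x ∈ E ∧ AccPt x (Filter.principal Z)} = Estar)
    (F : Set (OnePoint (ℝ × ℝ))) (hFfin : F.Finite)
    (hinfF : OnePoint.infty ∉ F) (hFE : F ∩ E = ∅) :
    ∃ h : ↥(E ∪ F) ≃ₜ ↥E,
      (∀ x : ↥(E ∪ F), (x : OnePoint (ℝ × ℝ)) ∈ Estar →
        ((h x : OnePoint (ℝ × ℝ)) = (x : OnePoint (ℝ × ℝ)))) ∧
      (∀ x : ↥(E ∪ F), ((x : OnePoint (ℝ × ℝ)) ∈ Z ∪ F ↔
        (h x : OnePoint (ℝ × ℝ)) ∈ Z)) :=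
  absorb_finite_set_into_endset_general E Estar Z hEclosed hEstarE hZE hZinf hZEstar hiso F hFfin
    hFE
end

section
/- Let h : 𝔹² → 𝔹² be defined by h(x,y) = (x cos t − y sin t, x sin t + y cos t) with t = tan(π(x² + y²)/2). Fix y ∈ (−1,1) and set a = √(1 − y²). Then the path γ : [0,a) → 𝔹², γ(s) = h(s,y), is divergent in 𝔹² (it eventually leaves every compact subset of 𝔹² as s → a) and has infinite length: its total variation on [0,a) equals ∞. -/
open Set Real Filter Topology

/-- The open unit disk `𝔹² = {(x,y) : x² + y² < 1}` (with the Euclidean metric). -/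
def unitDisk : Set (ℝ × ℝ) := {p | p.1 ^ 2 + p.2 ^ 2 < 1}

/-- The twisting map `h(x,y) = (x cos t − y sin t, x sin t + y cos t)`,
`t = tan(π(x² + y²)/2)`. -/
noncomputable def twist (p : ℝ × ℝ) : ℝ × ℝ :=
  (p.1 * Real.cos (Real.tan (π * (p.1 ^ 2 + p.2 ^ 2) / 2)) -
      p.2 * Real.sin (Real.tan (π * (p.1 ^ 2 + p.2 ^ 2) / 2)),
    p.1 * Real.sin (Real.tan (π * (p.1 ^ 2 + p.2 ^ 2) / 2)) +
      p.2 * Real.cos (Real.tan (π * (p.1 ^ 2 + p.2 ^ 2) / 2)))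

/-! Along the chord through height `y`, the map `twist` rotates `(s, y)` by the angle
`tan (π (s² + y²) / 2)`, which tends to `∞` as `s ↑ √(1 - y²)`. Rotations preserve the norm, so
the path runs off to `∂𝔹²`. Whenever the angle equals `n π` the rotation is `(-1)ⁿ`, so consecutive
such points lie on opposite sides of the `y`-axis, at horizontal distance at least the first of
their parameters `s₀ > 0`; there are infinitely many of them, hence the length is infinite. -/

theorem eVariationOn_eq_top_of_le_edist {α E : Type*} [LinearOrder α] [PseudoEMetricSpace E]
    {f : α → E} {s : Set α} {u : ℕ → α} (hu : Monotone u) (hus : ∀ i, u i ∈ s)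
    {ε : ENNReal} (hε : ε ≠ 0) (hf : ∀ i, ε ≤ edist (f (u (i + 1))) (f (u i))) :
    eVariationOn f s = ⊤ :=
  eq_top_iff.2 <| (ENNReal.tsum_const_eq_top_of_ne_zero hε).symm.le.trans <|
    ENNReal.tsum_le_of_sum_range_le fun _ =>
      (Finset.sum_le_sum fun i _ => hf i).trans (eVariationOn.sum_le hu hus)

theorem eventually_notMem_of_tendsto_sq_add_sq_one {α : Type*} {l : Filter α} {f : α → ℝ × ℝ}
    (hf : Tendsto (fun x => (f x).1 ^ 2 + (f x).2 ^ 2) l (𝓝 1)) {K : Set (ℝ × ℝ)}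
    (hK : IsCompact K) (hKD : K ⊆ unitDisk) : ∀ᶠ x in l, f x ∉ K := by
  set q : ℝ × ℝ → ℝ := fun p => p.1 ^ 2 + p.2 ^ 2
  have hqK : IsClosed (q '' K) := (hK.image (by fun_prop)).isClosed
  have hone : (1 : ℝ) ∉ q '' K := by
    rintro ⟨p, hp, hp1⟩
    exact (hKD hp).ne hp1
  filter_upwards [hf (hqK.isOpen_compl.mem_nhds hone)] with x hx hxK
  exact hx ⟨f x, hxK, rfl⟩

theorem fst_add_le_dist_neg_one_pow_smul (n : ℕ) (p q : ℝ × ℝ) :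
    |p.1 + q.1| ≤ dist ((-1 : ℝ) ^ (n + 1) • p) ((-1 : ℝ) ^ n • q) := by
  rw [dist_eq_norm, pow_succ, mul_neg_one, neg_smul, ← neg_add', ← smul_add, norm_neg, norm_smul,
    norm_pow, norm_neg, norm_one, one_pow, one_mul, ← Real.norm_eq_abs]
  exact norm_fst_le (p + q)

theorem twist_fst_sq_add_snd_sq (p : ℝ × ℝ) :
    (twist p).1 ^ 2 + (twist p).2 ^ 2 = p.1 ^ 2 + p.2 ^ 2 := by
  simp only [twist]
  linear_combination (p.1 ^ 2 + p.2 ^ 2) *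
    Real.sin_sq_add_cos_sq (Real.tan (π * (p.1 ^ 2 + p.2 ^ 2) / 2))

theorem twist_eq_neg_one_pow_smul {p : ℝ × ℝ} {n : ℕ}
    (h : Real.tan (π * (p.1 ^ 2 + p.2 ^ 2) / 2) = n * π) : twist p = (-1 : ℝ) ^ n • p := by
  rw [twist, h, cos_nat_mul_pi, sin_nat_mul_pi]
  ext <;> simp [mul_comm]

/-- The inverse of `s ↦ tan (π (s² + y²) / 2)` on `[0, √(1 - y²))`, i.e. the point of the chord at
height `y` that `twist` rotates by the angle `v`; it is a junk `0` when `v < tan (π y² / 2)`. -/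
noncomputable def chordParam (y v : ℝ) : ℝ := √(2 * arctan v / π - y ^ 2)

theorem chordParam_monotone (y : ℝ) : Monotone (chordParam y) := fun v w hvw => by
  unfold chordParam
  gcongr

section chordParam

variable {y v : ℝ}

theorem chordParam_mem_Ico (hy : y ^ 2 < 1) (v : ℝ) : chordParam y v ∈ Ico 0 √(1 - y ^ 2) := by
  refine ⟨sqrt_nonneg _, (sqrt_lt_sqrt_iff_of_pos (by linarith)).2 ?_⟩
  have : 2 * arctan v / π < 1 := by
    rw [div_lt_one pi_pos]
    linarith [arctan_lt_pi_div_two v]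
  linarith

theorem chordParam_pos (h : π * y ^ 2 / 2 < arctan v) : 0 < chordParam y v := by
  refine sqrt_pos.2 (sub_pos.2 ?_)
  rw [lt_div_iff₀ pi_pos]
  linarith

theorem tan_chordParam (h : π * y ^ 2 / 2 < arctan v) :
    tan (π * (chordParam y v ^ 2 + y ^ 2) / 2) = v := by
  have hX : 0 ≤ 2 * arctan v / π - y ^ 2 := by
    rw [sub_nonneg, le_div_iff₀ pi_pos]
    linarith
  rw [chordParam, sq_sqrt hX,
    show π * (2 * arctan v / π - y ^ 2 + y ^ 2) / 2 = arctan v by field_simp; ring,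
    tan_arctan]

end chordParam

theorem eVariationOn_twist_chord_eq_top {y : ℝ} (hy : y ^ 2 < 1) :
    eVariationOn (fun s : ℝ => twist (s, y)) (Ico 0 √(1 - y ^ 2)) = ⊤ := by
  have hlim : Tendsto (fun n : ℕ => arctan (n * π)) atTop (𝓝 (π / 2)) :=
    (tendsto_arctan_atTop.mono_right nhdsWithin_le_nhds).comp
      (tendsto_natCast_atTop_atTop.atTop_mul_const pi_pos)
  obtain ⟨N, hN⟩ := eventually_atTop.1 (hlim.eventually (eventually_gt_nhds
    (show π * y ^ 2 / 2 < π / 2 by nlinarith [pi_pos])))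
  set u : ℕ → ℝ := fun i => chordParam y ((N + i : ℕ) * π)
  have hN' (i : ℕ) : π * y ^ 2 / 2 < arctan ((N + i : ℕ) * π) := hN _ (by omega)
  have htwist (i : ℕ) : twist (u i, y) = (-1 : ℝ) ^ (N + i) • (u i, y) :=
    twist_eq_neg_one_pow_smul (tan_chordParam (hN' i))
  have hu : Monotone u := fun i j hij =>
    chordParam_monotone y (by gcongr)
  refine eVariationOn_eq_top_of_le_edist hu (fun i => chordParam_mem_Ico hy _)
    (ε := ENNReal.ofReal (u 0)) (ENNReal.ofReal_pos.2 (chordParam_pos (hN' 0))).ne' fun i => ?_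
  rw [htwist, htwist, edist_dist, ← add_assoc]
  refine ENNReal.ofReal_le_ofReal (le_trans ?_ (fst_add_le_dist_neg_one_pow_smul _ _ _))
  have h0 : 0 ≤ u 0 := (chordParam_mem_Ico hy _).1
  have hi : u 0 ≤ u i := hu (Nat.zero_le i)
  have hi1 : u 0 ≤ u (i + 1) := hu (Nat.zero_le _)
  rw [abs_of_nonneg (by linarith)]
  linarith

/-- for fixed `y ∈ (−1,1)` and `a = √(1 − y²)`, the path
`γ(s) = h(s, y)`, `s ∈ [0, a)`, stays in `𝔹²`, is divergent in `𝔹²` as `s → a`,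
and has infinite length (total variation `∞` on `[0,a)`). -/
theorem twist_of_chord_is_divergent_and_has_infinite_length
    (y : ℝ) (hy : y ∈ Set.Ioo (-1 : ℝ) 1) :
    (∀ s ∈ Set.Ico (0 : ℝ) (Real.sqrt (1 - y ^ 2)),
      twist (s, y) ∈ unitDisk) ∧
    (∀ K : Set (ℝ × ℝ), IsCompact K → K ⊆ unitDisk →
      ∀ᶠ s in 𝓝[<] (Real.sqrt (1 - y ^ 2)), twist (s, y) ∉ K) ∧
    eVariationOn (fun s : ℝ => twist (s, y))
      (Set.Ico (0 : ℝ) (Real.sqrt (1 - y ^ 2))) = ⊤ := by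
  have hy2 : y ^ 2 < 1 := by nlinarith [hy.1, hy.2]
  have ha : √(1 - y ^ 2) ^ 2 + y ^ 2 = 1 := by rw [sq_sqrt (by linarith)]; ring
  refine ⟨fun s hs => ?_, fun K hK hKD => ?_, eVariationOn_twist_chord_eq_top hy2⟩
  · show (twist (s, y)).1 ^ 2 + (twist (s, y)).2 ^ 2 < 1
    rw [twist_fst_sq_add_snd_sq]
    nlinarith [hs.1, hs.2]
  · refine eventually_notMem_of_tendsto_sq_add_sq_one ?_ hK hKD
    have hcont : Tendsto (fun s : ℝ => s ^ 2 + y ^ 2) (𝓝 √(1 - y ^ 2)) (𝓝 1) := by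
      have := (continuous_pow 2 |>.add_const (y ^ 2)).tendsto √(1 - y ^ 2)
      rwa [ha] at this
    simpa only [twist_fst_sq_add_snd_sq] using hcont.mono_left nhdsWithin_le_nhds
end

section
/- Let V = {(x,y,z) ∈ ℝ³ : (x² + y²)·|z| < 1}. Then there exists a diffeomorphism Ψ : ℝ³ → V of the form Ψ(x,y,z) = (x, y, ψ(x,y,z)) for a smooth function ψ : ℝ³ → ℝ; in particular, Ψ maps each vertical line {(x,y)} × ℝ diffeomorphically onto the vertical fiber V ∩ ({(x,y)} × ℝ), i.e. Ψ preserves leafwise the one-dimensional foliation dx = dy = 0. -/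
open Set

/-- The region `V = {(x,y,z) ∈ ℝ³ : (x² + y²)·|z| < 1}`. -/
def Vregion : Set (ℝ × ℝ × ℝ) := {q | (q.1 ^ 2 + q.2.1 ^ 2) * |q.2.2| < 1}

private lemma sqrt_pos_aux {t : ℝ} (h : 0 < t) : Real.sqrt t > 0 := Real.sqrt_pos.2 h

private lemma keyA (b z : ℝ) (hb : 0 ≤ b) :
    b * |z / Real.sqrt (1 + b ^ 2 * z ^ 2)| < 1 := by
  have hpos : (0:ℝ) < 1 + b ^ 2 * z ^ 2 := by positivity
  have hs : 0 < Real.sqrt (1 + b ^ 2 * z ^ 2) := Real.sqrt_pos.2 hpos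
  have hs2 : Real.sqrt (1 + b ^ 2 * z ^ 2) ^ 2 = 1 + b ^ 2 * z ^ 2 :=
    Real.sq_sqrt hpos.le
  rw [abs_div, abs_of_pos hs, ← mul_div_assoc, div_lt_one hs]
  nlinarith [abs_nonneg z, sq_abs z, mul_nonneg hb (abs_nonneg z)]

private lemma keyB (b z : ℝ) :
    (z / Real.sqrt (1 + b ^ 2 * z ^ 2)) /
      Real.sqrt (1 - b ^ 2 * (z / Real.sqrt (1 + b ^ 2 * z ^ 2)) ^ 2) = z := by
  have hpos : (0:ℝ) < 1 + b ^ 2 * z ^ 2 := by positivity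
  have hs : 0 < Real.sqrt (1 + b ^ 2 * z ^ 2) := Real.sqrt_pos.2 hpos
  have hs2 : Real.sqrt (1 + b ^ 2 * z ^ 2) ^ 2 = 1 + b ^ 2 * z ^ 2 :=
    Real.sq_sqrt hpos.le
  have h1 : 1 - b ^ 2 * (z / Real.sqrt (1 + b ^ 2 * z ^ 2)) ^ 2 =
      (Real.sqrt (1 + b ^ 2 * z ^ 2))⁻¹ ^ 2 := by
    field_simp
    linarith
  rw [h1, Real.sqrt_sq (by positivity)]
  field_simp

private lemma keyC (b w : ℝ) (h : b ^ 2 * w ^ 2 < 1) :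
    (w / Real.sqrt (1 - b ^ 2 * w ^ 2)) /
      Real.sqrt (1 + b ^ 2 * (w / Real.sqrt (1 - b ^ 2 * w ^ 2)) ^ 2) = w := by
  have hpos : (0:ℝ) < 1 - b ^ 2 * w ^ 2 := by linarith
  have hs : 0 < Real.sqrt (1 - b ^ 2 * w ^ 2) := Real.sqrt_pos.2 hpos
  have hs2 : Real.sqrt (1 - b ^ 2 * w ^ 2) ^ 2 = 1 - b ^ 2 * w ^ 2 :=
    Real.sq_sqrt hpos.le
  have h1 : 1 + b ^ 2 * (w / Real.sqrt (1 - b ^ 2 * w ^ 2)) ^ 2 =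
      (Real.sqrt (1 - b ^ 2 * w ^ 2))⁻¹ ^ 2 := by
    field_simp
    linarith
  rw [h1, Real.sqrt_sq (by positivity)]
  field_simp
  rw [mul_div_assoc, div_self (by rw [mul_comm]; exact hs.ne'), mul_one]

/-- there is a diffeomorphism `Ψ : ℝ³ → V` of the form
`Ψ(x,y,z) = (x, y, ψ(x,y,z))` with `ψ` smooth; in particular `Ψ` preserves leafwise
the vertical foliation `dx = dy = 0`, mapping each vertical line onto the
corresponding vertical fiber of `V`. -/
theorem exists_vertical_diffeo_to_Vregion :
    ∃ ψ : ℝ × ℝ × ℝ → ℝ, ContDiff ℝ (⊤ : ℕ∞) ψ ∧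
      Set.BijOn (fun q : ℝ × ℝ × ℝ => (q.1, q.2.1, ψ q)) Set.univ Vregion ∧
      ∃ g : ℝ × ℝ × ℝ → ℝ × ℝ × ℝ, ContDiffOn ℝ (⊤ : ℕ∞) g Vregion ∧
        (∀ q : ℝ × ℝ × ℝ, g (q.1, q.2.1, ψ q) = q) ∧
        (∀ q ∈ Vregion, ((g q).1, (g q).2.1, ψ (g q)) = q) := by
  set b : ℝ × ℝ × ℝ → ℝ := fun q => q.1 ^ 2 + q.2.1 ^ 2 with hbdef
  have hbnn : ∀ q, 0 ≤ b q := fun q => by positivity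
  set ψ : ℝ × ℝ × ℝ → ℝ :=
    fun q => q.2.2 / Real.sqrt (1 + (b q) ^ 2 * q.2.2 ^ 2) with hψdef
  set g : ℝ × ℝ × ℝ → ℝ × ℝ × ℝ :=
    fun q => (q.1, q.2.1, q.2.2 / Real.sqrt (1 - (b q) ^ 2 * q.2.2 ^ 2)) with hgdef
  have hbcd : ContDiff ℝ (⊤ : ℕ∞) b := by
    exact (contDiff_fst.pow 2).add ((contDiff_fst.comp contDiff_snd).pow 2)
  -- membership characterization
  have hmem : ∀ q : ℝ × ℝ × ℝ, q ∈ Vregion ↔ (b q) ^ 2 * q.2.2 ^ 2 < 1 := by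
    intro q
    constructor
    · intro h
      have h' : b q * |q.2.2| < 1 := h
      have h2 : (b q * |q.2.2|) ^ 2 < 1 :=
        pow_lt_one₀ (mul_nonneg (hbnn q) (abs_nonneg q.2.2)) h' two_ne_zero
      rw [mul_pow, sq_abs] at h2
      exact h2
    · intro h
      show b q * |q.2.2| < 1
      by_contra hc
      push_neg at hc
      have h2 : (1:ℝ) ≤ (b q * |q.2.2|) ^ 2 := one_le_pow₀ hc
      rw [mul_pow, sq_abs] at h2
      linarith
  -- ψ maps into V
  have hmaps : ∀ q : ℝ × ℝ × ℝ, (q.1, q.2.1, ψ q) ∈ Vregion := by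
    intro q
    show (q.1 ^ 2 + q.2.1 ^ 2) * |ψ q| < 1
    exact keyA (b q) q.2.2 (hbnn q)
  have hgψ : ∀ q : ℝ × ℝ × ℝ, g (q.1, q.2.1, ψ q) = q := by
    intro q
    simp only [hgdef, hψdef, hbdef]
    refine Prod.ext rfl (Prod.ext rfl ?_)
    exact keyB (q.1 ^ 2 + q.2.1 ^ 2) q.2.2
  have hψg : ∀ q ∈ Vregion, ((g q).1, (g q).2.1, ψ (g q)) = q := by
    intro q hq
    simp only [hgdef, hψdef, hbdef]
    refine Prod.ext rfl (Prod.ext rfl ?_)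
    exact keyC (q.1 ^ 2 + q.2.1 ^ 2) q.2.2 ((hmem q).1 hq)
  have hψcd : ContDiff ℝ (⊤ : ℕ∞) ψ := by
    rw [contDiff_iff_contDiffAt]
    intro q
    have hpos : (0:ℝ) < 1 + (b q) ^ 2 * q.2.2 ^ 2 := by positivity
    have hP : ContDiff ℝ (⊤ : ℕ∞) (fun q : ℝ × ℝ × ℝ => 1 + (b q) ^ 2 * q.2.2 ^ 2) :=
      contDiff_const.add ((hbcd.pow 2).mul ((contDiff_snd.comp contDiff_snd).pow 2))
    have hsq : ContDiffAt ℝ (⊤ : ℕ∞) (fun q : ℝ × ℝ × ℝ =>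
        Real.sqrt (1 + (b q) ^ 2 * q.2.2 ^ 2)) q :=
      (Real.contDiffAt_sqrt hpos.ne').comp q hP.contDiffAt
    exact (contDiff_snd.comp contDiff_snd).contDiffAt.div hsq
      (Real.sqrt_pos.2 hpos).ne'
  have hgcd : ContDiffOn ℝ (⊤ : ℕ∞) g Vregion := by
    intro q hq
    have hlt : (b q) ^ 2 * q.2.2 ^ 2 < 1 := (hmem q).1 hq
    have hpos : (0:ℝ) < 1 - (b q) ^ 2 * q.2.2 ^ 2 := by linarith
    have hP : ContDiff ℝ (⊤ : ℕ∞) (fun q : ℝ × ℝ × ℝ => 1 - (b q) ^ 2 * q.2.2 ^ 2) :=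
      contDiff_const.sub ((hbcd.pow 2).mul ((contDiff_snd.comp contDiff_snd).pow 2))
    have hsq : ContDiffAt ℝ (⊤ : ℕ∞) (fun q : ℝ × ℝ × ℝ =>
        Real.sqrt (1 - (b q) ^ 2 * q.2.2 ^ 2)) q :=
      (Real.contDiffAt_sqrt hpos.ne').comp q hP.contDiffAt
    have h3 : ContDiffAt ℝ (⊤ : ℕ∞) (fun q : ℝ × ℝ × ℝ =>
        q.2.2 / Real.sqrt (1 - (b q) ^ 2 * q.2.2 ^ 2)) q :=
      (contDiff_snd.comp contDiff_snd).contDiffAt.div hsq (Real.sqrt_pos.2 hpos).ne'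
    exact (ContDiffAt.prodMk contDiff_fst.contDiffAt
      (ContDiffAt.prodMk (contDiff_fst.comp contDiff_snd).contDiffAt h3)).contDiffWithinAt
  refine ⟨ψ, hψcd, ?_, g, hgcd, hgψ, hψg⟩
  refine ⟨fun q _ => hmaps q, ?_, ?_⟩
  · intro p _ r _ h
    have := congrArg g h
    rwa [hgψ p, hgψ r] at this
  · intro q hq
    refine ⟨g q, trivial, ?_⟩
    exact hψg q hq
end
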